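/- There exist a positive integer n and real numbers t_1, ..., t_n in (0, ∞) such that the function Φ_n is not concave on the interval (-1, 1). -/

import Mathlib

open MeasureTheory Real

/-- The one-dimensional Gaussian density `p_t(x) = (2πt)^{-1/2} exp(-x²/(2t))`. -/
noncomputable def gaussDensity (t x : ℝ) : ℝ :=
  (Real.sqrt (2 * Real.pi * t))⁻¹ * Real.exp (-x ^ 2 / (2 * t))

/-- `Φ_n(x) = ∫_{-1}^{1} ⋯ ∫_{-1}^{1} ∏_{i=1}^{n} p_{t_i}(x_{i-1} - x_i) dx_1 ⋯ dx_n`,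
with `x_0 = x`. -/
noncomputable def Phi (n : ℕ) (t : Fin n → ℝ) (x : ℝ) : ℝ :=
  ∫ y in Set.Icc (fun _ : Fin n => (-1 : ℝ)) (fun _ : Fin n => (1 : ℝ)),
    ∏ i : Fin n,
      gaussDensity (t i) ((Fin.cons x y : Fin (n + 1) → ℝ) i.castSucc - (Fin.cons x y : Fin (n + 1) → ℝ) i.succ)

noncomputable def p1 : ℝ → ℝ := gaussDensity (1/100)
noncomputable def p2 : ℝ → ℝ := gaussDensity 1
noncomputable def Nc (y : ℝ) : ℝ := ∫ u in (0:ℝ)..y, p2 u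
noncomputable def G (y : ℝ) : ℝ := Nc (y+1) - Nc (y-1)

lemma p1_cont : Continuous p1 := by unfold p1 gaussDensity; continuity
lemma p2_cont : Continuous p2 := by unfold p2 gaussDensity; continuity

lemma Nc_cont : Continuous Nc := by
  have : ∀ y, HasDerivAt Nc (p2 y) y := by
    intro y
    exact intervalIntegral.integral_hasDerivAt_right
      (p2_cont.intervalIntegrable _ _) (p2_cont.stronglyMeasurableAtFilter _ _)
      p2_cont.continuousAt
  exact Differentiable.continuous (fun y => (this y).differentiableAt)

lemma G_eq (y : ℝ) : G y = ∫ u in (y-1)..(y+1), p2 u := by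
  have h1 : ∫ u in (y-1)..(0:ℝ), p2 u = - Nc (y-1) := by
    rw [intervalIntegral.integral_symm]; rfl
  rw [← intervalIntegral.integral_add_adjacent_intervals (a := y-1) (b := 0) (c := y+1)
    (p2_cont.intervalIntegrable _ _) (p2_cont.intervalIntegrable _ _), h1]
  unfold G Nc
  ring

lemma G_cont : Continuous G := by
  unfold G; exact (Nc_cont.comp (by continuity)).sub (Nc_cont.comp (by continuity))

lemma phi_eq (x : ℝ) :
    Phi 2 ![1/100, 1] x = ∫ y in (-1:ℝ)..1, p1 (x - y) * G y := by
  have hint : ∀ y : Fin 2 → ℝ,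
      (∏ i : Fin 2, gaussDensity (![1/100, 1] i)
        ((Fin.cons x y : Fin 3 → ℝ) i.castSucc - (Fin.cons x y : Fin 3 → ℝ) i.succ))
      = p1 (x - y 0) * p2 (y 0 - y 1) := by
    intro y
    rw [Fin.prod_univ_two]
    rfl
  unfold Phi
  simp_rw [hint]
  have hset : Set.Icc (fun _ : Fin 2 => (-1 : ℝ)) (fun _ : Fin 2 => (1 : ℝ))
      = MeasurableEquiv.finTwoArrow ⁻¹' ((Set.Icc (-1:ℝ) 1) ×ˢ (Set.Icc (-1:ℝ) 1)) := by
    ext y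
    simp [MeasurableEquiv.finTwoArrow, Set.Icc, Pi.le_def, Fin.forall_fin_two]
    tauto
  rw [hset]
  have key : ∫ (y : Fin 2 → ℝ) in
        MeasurableEquiv.finTwoArrow ⁻¹' ((Set.Icc (-1:ℝ) 1) ×ˢ (Set.Icc (-1:ℝ) 1)),
        p1 (x - y 0) * p2 (y 0 - y 1)
      = ∫ (p : ℝ × ℝ) in (Set.Icc (-1:ℝ) 1) ×ˢ (Set.Icc (-1:ℝ) 1),
        p1 (x - p.1) * p2 (p.1 - p.2) :=
    (volume_preserving_finTwoArrow ℝ).setIntegral_preimage_emb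
      (MeasurableEquiv.measurableEmbedding _)
      (fun p : ℝ × ℝ => p1 (x - p.1) * p2 (p.1 - p.2)) _
  rw [key, Measure.volume_eq_prod]
  rw [MeasureTheory.setIntegral_prod]
  · have inner : ∀ y : ℝ, ∫ z in Set.Icc (-1:ℝ) 1, p1 (x - y) * p2 (y - z)
        = p1 (x - y) * G y := by
      intro y
      rw [MeasureTheory.integral_const_mul]
      congr 1
      rw [MeasureTheory.integral_Icc_eq_integral_Ioc,
        ← intervalIntegral.integral_of_le (by norm_num : (-1:ℝ) ≤ 1),
        intervalIntegral.integral_comp_sub_left (fun u => p2 u) y, G_eq]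
      norm_num
    simp_rw [inner]
    rw [MeasureTheory.integral_Icc_eq_integral_Ioc,
      ← intervalIntegral.integral_of_le (by norm_num : (-1:ℝ) ≤ 1)]
  · apply Continuous.continuousOn ?_ |>.integrableOn_compact (isCompact_Icc.prod isCompact_Icc)
    exact ((p1_cont.comp (by continuity)).mul (p2_cont.comp (by continuity)))

noncomputable def c1 : ℝ := (Real.sqrt (2 * Real.pi * (1/100)))⁻¹
noncomputable def c2 : ℝ := (Real.sqrt (2 * Real.pi * 1))⁻¹

lemma sqrt1_bounds : 0.2506627 ≤ Real.sqrt (2 * Real.pi * (1/100)) ∧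
    Real.sqrt (2 * Real.pi * (1/100)) ≤ 0.25066285 := by
  have hpl := Real.pi_gt_d6
  have hpu := Real.pi_lt_d6
  constructor
  · rw [show (0.2506627:ℝ) = Real.sqrt (0.2506627^2) by
      rw [Real.sqrt_sq]; norm_num]
    apply Real.sqrt_le_sqrt; nlinarith
  · rw [show (0.25066285:ℝ) = Real.sqrt (0.25066285^2) by
      rw [Real.sqrt_sq]; norm_num]
    apply Real.sqrt_le_sqrt; nlinarith

lemma c1_bounds : 3.989422 ≤ c1 ∧ c1 ≤ 3.989426 := by
  obtain ⟨h1, h2⟩ := sqrt1_bounds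
  unfold c1
  have hs : (0:ℝ) < Real.sqrt (2 * Real.pi * (1/100)) := lt_of_lt_of_le (by norm_num) h1
  constructor
  · calc (3.989422:ℝ) ≤ (0.25066285:ℝ)⁻¹ := by norm_num
      _ ≤ _ := inv_anti₀ hs h2
  · calc (Real.sqrt (2 * Real.pi * (1/100)))⁻¹ ≤ (0.2506627:ℝ)⁻¹ :=
        inv_anti₀ (by norm_num) h1
      _ ≤ 3.989426 := by norm_num

lemma sqrt2_bounds : 2.506627 ≤ Real.sqrt (2 * Real.pi * 1) ∧
    Real.sqrt (2 * Real.pi * 1) ≤ 2.5066285 := by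
  have hpl := Real.pi_gt_d6
  have hpu := Real.pi_lt_d6
  constructor
  · rw [show (2.506627:ℝ) = Real.sqrt (2.506627^2) by rw [Real.sqrt_sq]; norm_num]
    apply Real.sqrt_le_sqrt; nlinarith
  · rw [show (2.5066285:ℝ) = Real.sqrt (2.5066285^2) by rw [Real.sqrt_sq]; norm_num]
    apply Real.sqrt_le_sqrt; nlinarith

lemma c2_bounds : 0.3989422 ≤ c2 ∧ c2 ≤ 0.3989425 := by
  obtain ⟨h1, h2⟩ := sqrt2_bounds
  have hs : (0:ℝ) < Real.sqrt (2 * Real.pi * 1) := lt_of_lt_of_le (by norm_num) h1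
  unfold c2
  constructor
  · calc (0.3989422:ℝ) ≤ (2.5066285:ℝ)⁻¹ := by norm_num
      _ ≤ _ := inv_anti₀ hs h2
  · calc (Real.sqrt (2 * Real.pi * 1))⁻¹ ≤ (2.506627:ℝ)⁻¹ := inv_anti₀ (by norm_num) h1
      _ ≤ 0.3989425 := by norm_num

lemma exp_neg_le (v : ℝ) (hv : 0 ≤ v) : Real.exp (-v) ≤ 1 := by
  rw [Real.exp_le_one_iff]; linarith

lemma exp_neg_ge (v : ℝ) : 1 - v ≤ Real.exp (-v) := by
  have := Real.add_one_le_exp (-v); linarith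

lemma exp_half_le : Real.exp (-(1:ℝ)/2) ≤ 0.6066 := by
  have h1 : Real.exp (-(1:ℝ)/2) * Real.exp (-(1:ℝ)/2) = Real.exp (-1) := by
    rw [← Real.exp_add]; norm_num
  have h2 : Real.exp (-1:ℝ) ≤ 0.36788 := by
    rw [Real.exp_neg]
    rw [show (0.36788:ℝ) = (1/0.36788)⁻¹ by norm_num]
    apply inv_anti₀ (by norm_num)
    calc (1/0.36788 : ℝ) ≤ 2.7182818283 := by norm_num
      _ ≤ Real.exp 1 := le_of_lt Real.exp_one_gt_d9
  nlinarith [Real.exp_pos (-(1:ℝ)/2)]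

lemma exp_neg_two_le : Real.exp (-2:ℝ) ≤ 0.1353353 := by
  have h2 : Real.exp (2:ℝ) = Real.exp 1 * Real.exp 1 := by rw [← Real.exp_add]; norm_num
  have he := Real.exp_one_gt_d9
  rw [Real.exp_neg]
  rw [show (0.1353353:ℝ) = (1/0.1353353)⁻¹ by norm_num]
  apply inv_anti₀ (by norm_num)
  rw [h2]; nlinarith

lemma exp_neg_180_le : Real.exp (-180:ℝ) ≤ 1e-20 := by
  have h3 : Real.exp (3:ℝ) ≥ 4 := by have := Real.add_one_le_exp (3:ℝ); linarith
  have h180 : Real.exp (180:ℝ) = Real.exp 3 ^ (60:ℕ) := by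
    rw [← Real.exp_nat_mul]; norm_num
  rw [Real.exp_neg, show (1e-20:ℝ) = (1e20)⁻¹ by norm_num]
  apply inv_anti₀ (by norm_num)
  rw [h180]
  calc (1e20:ℝ) ≤ 4 ^ (60:ℕ) := by norm_num
    _ ≤ _ := pow_le_pow_left₀ (by norm_num) h3 60

lemma gauss_total (t : ℝ) (ht : 0 < t) : ∫ x : ℝ, gaussDensity t x = 1 := by
  unfold gaussDensity
  rw [MeasureTheory.integral_const_mul]
  have h : ∀ x : ℝ, Real.exp (-x ^ 2 / (2*t)) = Real.exp (-(1/(2*t)) * x ^ 2) := by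
    intro x; ring_nf
  simp_rw [h, integral_gaussian]
  have h1 : π / (1 / (2 * t)) = 2 * π * t := by field_simp
  rw [h1, inv_mul_cancel₀]
  positivity

lemma gauss_integrable (t : ℝ) (ht : 0 < t) : Integrable (gaussDensity t) := by
  unfold gaussDensity
  apply Integrable.const_mul
  have h : ∀ x : ℝ, Real.exp (-x ^ 2 / (2*t)) = Real.exp (-(1/(2*t)) * x ^ 2) := by
    intro x; ring_nf
  simp_rw [h]
  exact integrable_exp_neg_mul_sq (by positivity)

lemma gauss_nonneg (t x : ℝ) : 0 ≤ gaussDensity t x := by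
  unfold gaussDensity; positivity

lemma p1_eq (u : ℝ) : p1 u = c1 * Real.exp (-u^2 * 50) := by
  unfold p1 gaussDensity c1
  norm_num
  left
  ring_nf

lemma p2_eq (u : ℝ) : p2 u = c2 * Real.exp (-u^2 / 2) := by
  unfold p2 gaussDensity c2
  norm_num

lemma p1_le (u : ℝ) : p1 u ≤ c1 := by
  rw [p1_eq]
  have h := exp_neg_le (u^2*50) (by positivity)
  rw [show -u^2*50 = -(u^2*50) by ring]
  nlinarith [c1_bounds.1]

lemma p1_nonneg (u : ℝ) : 0 ≤ p1 u := gauss_nonneg _ _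
lemma p2_nonneg (u : ℝ) : 0 ≤ p2 u := gauss_nonneg _ _

lemma G_nonneg (y : ℝ) : 0 ≤ G y := by
  rw [G_eq]
  apply intervalIntegral.integral_nonneg (by linarith) (fun u _ => p2_nonneg u)

lemma int_p2_le_one (a b : ℝ) (hab : a ≤ b) : (∫ u in a..b, p2 u) ≤ 1 := by
  rw [intervalIntegral.integral_of_le hab]
  calc (∫ u in Set.Ioc a b, p2 u) ≤ ∫ u, p2 u :=
      setIntegral_le_integral (gauss_integrable 1 (by norm_num))
        (Filter.Eventually.of_forall (fun u => p2_nonneg u))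
    _ = 1 := gauss_total 1 (by norm_num)

lemma G_le_one (y : ℝ) : G y ≤ 1 := by
  rw [G_eq]; exact int_p2_le_one _ _ (by linarith)

lemma int_p1_le_one (x a b : ℝ) (hab : a ≤ b) : (∫ w in a..b, p1 (x - w)) ≤ 1 := by
  rw [intervalIntegral.integral_comp_sub_left (fun u => p1 u) x]
  rw [intervalIntegral.integral_of_le (by linarith)]
  calc (∫ u in Set.Ioc (x-b) (x-a), p1 u) ≤ ∫ u, p1 u :=
      setIntegral_le_integral (gauss_integrable (1/100) (by norm_num))
        (Filter.Eventually.of_forall (fun u => p1_nonneg u))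
    _ = 1 := gauss_total (1/100) (by norm_num)

lemma exp_lip (u v : ℝ) : |Real.exp (-u^2/2) - Real.exp (-v^2/2)| ≤ 0.6066 * |u - v| := by
  have hder : ∀ z : ℝ, HasDerivAt (fun w : ℝ => Real.exp (-w^2/2)) (Real.exp (-z^2/2) * (-z)) z := by
    intro z
    have h1 : HasDerivAt (fun w : ℝ => -w^2/2) (-z) z := by
      have h2 := ((hasDerivAt_pow 2 z).neg.div_const 2)
      refine h2.congr_deriv ?_
      push_cast
      ring
    exact h1.exp
  have hbound : ∀ z : ℝ, ‖Real.exp (-z^2/2) * (-z)‖ ≤ 0.6066 := by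
    intro z
    rw [Real.norm_eq_abs, abs_mul, abs_neg, abs_of_pos (Real.exp_pos _)]
    have h1 : |z| ≤ Real.exp ((z^2-1)/2) := by
      have h2 := Real.add_one_le_exp ((z^2-1)/2)
      nlinarith [sq_nonneg (|z| - 1), sq_abs z]
    have h3 : Real.exp (-z^2/2) * Real.exp ((z^2-1)/2) = Real.exp (-(1:ℝ)/2) := by
      rw [← Real.exp_add]; ring_nf
    calc Real.exp (-z^2/2) * |z| ≤ Real.exp (-z^2/2) * Real.exp ((z^2-1)/2) := by
          apply mul_le_mul_of_nonneg_left h1 (le_of_lt (Real.exp_pos _))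
      _ = Real.exp (-(1:ℝ)/2) := h3
      _ ≤ 0.6066 := exp_half_le
  have := Convex.norm_image_sub_le_of_norm_hasDerivWithin_le
    (f := fun w : ℝ => Real.exp (-w^2/2)) (f' := fun z => Real.exp (-z^2/2) * (-z))
    (s := Set.univ) (fun z _ => (hder z).hasDerivWithinAt)
    (fun z _ => hbound z) convex_univ (Set.mem_univ v) (Set.mem_univ u)
  simpa [Real.norm_eq_abs] using this

lemma p2_lip (u v : ℝ) : |p2 u - p2 v| ≤ 0.242 * |u - v| := by
  rw [p2_eq, p2_eq, ← mul_sub, abs_mul]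
  have hc2 := c2_bounds
  have h1 := exp_lip u v
  have h2 : |c2| = c2 := abs_of_pos (by linarith [hc2.1])
  rw [h2]
  nlinarith [abs_nonneg (u - v), abs_nonneg (Real.exp (-u^2/2) - Real.exp (-v^2/2))]

lemma Tb (c : ℝ) : |(∫ u in c..(c + 1/10000), p2 u) - ∫ u in (c - 1/10000)..c, p2 u|
    ≤ 0.242 * (1/10000:ℝ)^2 := by
  have h1 : (∫ u in c..(c + 1/10000), p2 u)
      = ∫ u in (c - 1/10000)..c, p2 (u + 1/10000) := by
    rw [intervalIntegral.integral_comp_add_right (fun u => p2 u) (1/10000)]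
    rw [show c - 1/10000 + 1/10000 = c by ring]
  have hc : Continuous (fun u : ℝ => p2 (u + 1/10000)) := p2_cont.comp (continuous_add_right _)
  rw [h1, ← intervalIntegral.integral_sub (hc.intervalIntegrable _ _)
    (p2_cont.intervalIntegrable _ _)]
  have h2 : |∫ u in (c - 1/10000)..c, (p2 (u + 1/10000) - p2 u)|
      ≤ ∫ u in (c - 1/10000)..c, |p2 (u + 1/10000) - p2 u| :=
    intervalIntegral.abs_integral_le_integral_abs (by norm_num)
  have h3 : (∫ u in (c - 1/10000)..c, |p2 (u + 1/10000) - p2 u|)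
      ≤ ∫ u in (c - 1/10000)..c, (0.242 * (1/10000:ℝ)) := by
    apply intervalIntegral.integral_mono_on (by norm_num)
      ((hc.sub p2_cont).abs.intervalIntegrable _ _)
      (intervalIntegrable_const)
    intro z _
    have h5 := p2_lip (z + 1/10000) z
    have h6 : |z + 1/10000 - z| = 1/10000 := by norm_num
    rw [h6] at h5
    show |p2 (z + 1/10000) - p2 z| ≤ _
    linarith
  rw [intervalIntegral.integral_const] at h3
  have h4 : (c - (c - 1/10000)) • (0.242 * (1/10000:ℝ)) = 0.242 * (1/10000:ℝ)^2 := by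
    rw [smul_eq_mul]; ring
  rw [h4] at h3
  linarith

lemma shift_diff (a b d : ℝ) :
    (∫ u in (a+d)..(b+d), p2 u) - ∫ u in a..b, p2 u
      = (∫ u in b..(b+d), p2 u) - ∫ u in a..(a+d), p2 u := by
  have h1 := intervalIntegral.integral_add_adjacent_intervals (μ := volume) (a := a) (b := a+d)
    (c := b+d) (p2_cont.intervalIntegrable _ _) (p2_cont.intervalIntegrable _ _)
  have h2 := intervalIntegral.integral_add_adjacent_intervals (μ := volume) (a := a) (b := b)
    (c := b+d) (p2_cont.intervalIntegrable _ _) (p2_cont.intervalIntegrable _ _)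
  linarith

lemma G_shift (w d : ℝ) : G (w+d) - G w
    = (∫ u in (w+1)..((w+1)+d), p2 u) - ∫ u in (w-1)..((w-1)+d), p2 u := by
  rw [G_eq, G_eq]
  have h := shift_diff (w-1) (w+1) d
  rw [show w+d-1 = (w-1)+d by ring, show w+d+1 = (w+1)+d by ring]
  linarith

lemma G_second (w : ℝ) :
    -(0.484 * (1/10000:ℝ)^2) ≤ G (w - 1/10000) + G (w + 1/10000) - 2 * G w := by
  have e1 := G_shift w (1/10000)
  have e2 := G_shift (w - 1/10000) (1/10000)
  rw [show w - 1/10000 + 1/10000 = w by ring,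
    show w - 1/10000 + 1 = (w+1) - 1/10000 by ring,
    show w - 1/10000 - 1 = (w-1) - 1/10000 by ring,
    show (w+1) - 1/10000 + 1/10000 = w+1 by ring,
    show (w-1) - 1/10000 + 1/10000 = w-1 by ring] at e2
  have t1 := abs_le.mp (Tb (w+1))
  have t2 := abs_le.mp (Tb (w-1))
  have hb1 : (w+1) + 1/10000 = w+1+1/10000 := by ring
  have hb2 : (w-1) + 1/10000 = w-1+1/10000 := by ring
  rw [hb1, hb2] at e1
  linarith [t1.1, t1.2, t2.1, t2.2]

lemma G_shift_near1 (w : ℝ) (hw : w ∈ Set.Icc (1 - 1/10000 : ℝ) 1) :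
    0.344 * (1/10000:ℝ) ≤ G (w - 1/10000) - G w := by
  obtain ⟨hw1, hw2⟩ := hw
  have e2 := G_shift (w - 1/10000) (1/10000)
  rw [show w - 1/10000 + 1/10000 = w by ring,
    show w - 1/10000 + 1 = (w+1) - 1/10000 by ring,
    show w - 1/10000 - 1 = (w-1) - 1/10000 by ring,
    show (w+1) - 1/10000 + 1/10000 = w+1 by ring,
    show (w-1) - 1/10000 + 1/10000 = w-1 by ring] at e2
  -- e2 : G w - G (w - 1/10000) = ∫_{(w+1)-δ}^{w+1} p2 - ∫_{(w-1)-δ}^{w-1} p2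
  have hc2 := c2_bounds
  -- lower bound for the integral near -0
  have low : (1/10000:ℝ) * (c2 * 0.99999998)
      ≤ ∫ u in ((w-1) - 1/10000)..(w-1), p2 u := by
    have hmono : ∀ u ∈ Set.Icc ((w-1) - 1/10000) (w-1), c2 * 0.99999998 ≤ p2 u := by
      intro u hu
      obtain ⟨hu1, hu2⟩ := hu
      rw [p2_eq]
      have hu3 : -2/10000 ≤ u := by linarith
      have hu4 : u ≤ 0 := by linarith
      have hsq : u^2 ≤ (2/10000)^2 := by nlinarith
      have := exp_neg_ge (u^2/2)
      have he : Real.exp (-u^2/2) ≥ 0.99999998 := by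
        rw [show -u^2/2 = -(u^2/2) by ring]
        nlinarith
      nlinarith [hc2.1]
    have h := intervalIntegral.integral_mono_on (μ := volume) (by norm_num : (w-1) - 1/10000 ≤ w-1)
      intervalIntegrable_const (p2_cont.intervalIntegrable _ _) hmono
    rw [intervalIntegral.integral_const, smul_eq_mul] at h
    calc (1/10000:ℝ) * (c2 * 0.99999998) = ((w-1) - ((w-1) - 1/10000)) * (c2 * 0.99999998) := by
          ring_nf
      _ ≤ _ := h
  have upp : (∫ u in ((w+1) - 1/10000)..(w+1), p2 u) ≤ (1/10000:ℝ) * (c2 * 0.1354) := by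
    have hmono : ∀ u ∈ Set.Icc ((w+1) - 1/10000) (w+1), p2 u ≤ c2 * 0.1354 := by
      intro u hu
      obtain ⟨hu1, hu2⟩ := hu
      rw [p2_eq]
      have hu3 : (1.9998:ℝ) ≤ u := by linarith
      have hsq : (1.9996:ℝ) ≤ u^2/2 := by nlinarith
      have he : Real.exp (-u^2/2) ≤ Real.exp (-1.9996) := by
        apply Real.exp_le_exp.mpr; linarith
      have he2 : Real.exp (-1.9996:ℝ) ≤ 0.1354 := by
        rw [show (-1.9996:ℝ) = -2 + 0.0004 by norm_num, Real.exp_add]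
        have ha := exp_neg_two_le
        have hb : Real.exp (0.0004:ℝ) ≤ 1.00041 := by
          have hx := exp_neg_ge (0.0004:ℝ)
          have hy : Real.exp (0.0004:ℝ) * Real.exp (-0.0004:ℝ) = 1 := by
            rw [← Real.exp_add]; norm_num
          nlinarith [Real.exp_pos (0.0004:ℝ), Real.exp_pos (-0.0004:ℝ)]
        nlinarith [Real.exp_pos (-2:ℝ), Real.exp_pos (0.0004:ℝ)]
      nlinarith [hc2.1, hc2.2, Real.exp_pos (-u^2/2)]
    have h := intervalIntegral.integral_mono_on (μ := volume) (by norm_num : (w+1) - 1/10000 ≤ w+1)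
      (p2_cont.intervalIntegrable _ _) intervalIntegrable_const hmono
    rw [intervalIntegral.integral_const, smul_eq_mul] at h
    calc (∫ u in ((w+1) - 1/10000)..(w+1), p2 u)
        ≤ ((w+1) - ((w+1) - 1/10000)) * (c2 * 0.1354) := h
      _ = (1/10000:ℝ) * (c2 * 0.1354) := by ring_nf
  have : G w - G (w - 1/10000)
      ≤ (1/10000:ℝ) * (c2 * 0.1354) - (1/10000:ℝ) * (c2 * 0.99999998) := by
    rw [e2]; linarith
  nlinarith [hc2.1, hc2.2]

noncomputable def F (x : ℝ) : ℝ := ∫ y in (-1:ℝ)..1, p1 (x - y) * G y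

lemma contPG (x e : ℝ) : Continuous (fun w : ℝ => p1 (x - w) * G (w + e)) :=
  (p1_cont.comp (continuous_const.sub continuous_id)).mul
    (G_cont.comp (continuous_id.add continuous_const))

lemma contPG' (x e : ℝ) : Continuous (fun w : ℝ => p1 (x - w) * G (w - e)) :=
  (p1_cont.comp (continuous_const.sub continuous_id)).mul
    (G_cont.comp (continuous_id.sub continuous_const))

lemma contPG0 (x : ℝ) : Continuous (fun w : ℝ => p1 (x - w) * G w) :=
  (p1_cont.comp (continuous_const.sub continuous_id)).mul G_cont

lemma F_shift_minus (x d : ℝ) : F (x - d) = ∫ w in (-1+d)..(1+d), p1 (x - w) * G (w - d) := by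
  unfold F
  have key := intervalIntegral.integral_comp_add_right (a := (-1:ℝ)) (b := 1)
    (fun w => p1 (x - w) * G (w - d)) d
  rw [← key]
  apply intervalIntegral.integral_congr
  intro y _
  simp only
  rw [show x - (y + d) = x - d - y by ring, show y + d - d = y by ring]

lemma F_shift_plus (x d : ℝ) : F (x + d) = ∫ w in (-1-d)..(1-d), p1 (x - w) * G (w + d) := by
  unfold F
  have key := intervalIntegral.integral_comp_sub_right (a := (-1:ℝ)) (b := 1)
    (fun w => p1 (x - w) * G (w + d)) d
  rw [← key]
  apply intervalIntegral.integral_congr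
  intro y _
  simp only
  rw [show x - (y - d) = x + d - y by ring, show y - d + d = y by ring]

lemma part1 (x : ℝ) :
    -(0.484 * (1/10000:ℝ)^2) ≤
      (∫ w in (-1+1/10000:ℝ)..(1-1/10000), p1 (x - w) * G (w - 1/10000))
      + (∫ w in (-1+1/10000:ℝ)..(1-1/10000), p1 (x - w) * G (w + 1/10000))
      - 2 * ∫ w in (-1+1/10000:ℝ)..(1-1/10000), p1 (x - w) * G w := by
  have hab : (-1+1/10000:ℝ) ≤ 1-1/10000 := by norm_num
  have i1 := (contPG' x (1/10000)).intervalIntegrable (μ := volume) (-1+1/10000) (1-1/10000)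
  have i2 := (contPG x (1/10000)).intervalIntegrable (μ := volume) (-1+1/10000) (1-1/10000)
  have i3 := (contPG0 x).intervalIntegrable (μ := volume) (-1+1/10000) (1-1/10000)
  have e1 : (∫ w in (-1+1/10000:ℝ)..(1-1/10000), p1 (x - w) * G (w - 1/10000))
      + (∫ w in (-1+1/10000:ℝ)..(1-1/10000), p1 (x - w) * G (w + 1/10000))
      - 2 * (∫ w in (-1+1/10000:ℝ)..(1-1/10000), p1 (x - w) * G w)
      = ∫ w in (-1+1/10000:ℝ)..(1-1/10000),
          (p1 (x - w) * G (w - 1/10000) + p1 (x - w) * G (w + 1/10000)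
            - 2 * (p1 (x - w) * G w)) := by
    rw [intervalIntegral.integral_sub (i1.add i2) (i3.const_mul 2),
      intervalIntegral.integral_add i1 i2, intervalIntegral.integral_const_mul]
  rw [e1]
  have mono : ∀ w ∈ Set.Icc (-1+1/10000:ℝ) (1-1/10000),
      -(0.484 * (1/10000:ℝ)^2) * p1 (x - w)
        ≤ p1 (x - w) * G (w - 1/10000) + p1 (x - w) * G (w + 1/10000)
          - 2 * (p1 (x - w) * G w) := by
    intro w _
    have hs := G_second w
    have hp := p1_nonneg (x - w)
    nlinarith
  have h2 := intervalIntegral.integral_mono_on (μ := volume) hab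
    ((continuous_const.mul (p1_cont.comp (continuous_const.sub continuous_id))).intervalIntegrable _ _)
    (((i1.add i2).sub (i3.const_mul 2))) mono
  have h3 : (∫ w in (-1+1/10000:ℝ)..(1-1/10000), -(0.484 * (1/10000:ℝ)^2) * p1 (x - w))
      = -(0.484 * (1/10000:ℝ)^2) * ∫ w in (-1+1/10000:ℝ)..(1-1/10000), p1 (x - w) := by
    rw [intervalIntegral.integral_const_mul]
  have h4 := int_p1_le_one x (-1+1/10000) (1-1/10000) hab
  have h5 : (0:ℝ) ≤ ∫ w in (-1+1/10000:ℝ)..(1-1/10000), p1 (x - w) :=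
    intervalIntegral.integral_nonneg hab (fun u _ => p1_nonneg _)
  calc -(0.484 * (1/10000:ℝ)^2)
      ≤ -(0.484 * (1/10000:ℝ)^2) * ∫ w in (-1+1/10000:ℝ)..(1-1/10000), p1 (x - w) := by nlinarith
    _ = ∫ w in (-1+1/10000:ℝ)..(1-1/10000), -(0.484 * (1/10000:ℝ)^2) * p1 (x - w) := h3.symm
    _ ≤ _ := h2

lemma part2 :
    1.12 * (1/10000:ℝ)^2 ≤
      (∫ w in (1-1/10000:ℝ)..(1+1/10000), p1 ((19997/20000:ℝ) - w) * G (w - 1/10000))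
      - 2 * ∫ w in (1-1/10000:ℝ)..1, p1 ((19997/20000:ℝ) - w) * G w := by
  have hc1 := c1_bounds
  set q : ℝ := c1 * (1 - 1/320000) with hq
  have hq0 : 0 ≤ q := by nlinarith [hc1.1]
  -- pointwise lower bound for p1 near the right edge
  have pbound : ∀ w ∈ Set.Icc (1-1/10000:ℝ) (1+1/10000), q ≤ p1 ((19997/20000:ℝ) - w) := by
    intro w hw
    obtain ⟨hw1, hw2⟩ := hw
    rw [p1_eq]
    have hu1 : -1/4000 ≤ 19997/20000 - w := by linarith
    have hu2 : 19997/20000 - w ≤ 0 := by linarith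
    have hsq : (19997/20000 - w)^2 * 50 ≤ 1/320000 := by nlinarith
    have he : Real.exp (-(19997/20000 - w)^2 * 50) ≥ 1 - 1/320000 := by
      rw [show -(19997/20000 - w)^2 * 50 = -((19997/20000 - w)^2*50) by ring]
      have := exp_neg_ge ((19997/20000 - w)^2*50)
      linarith
    rw [hq]
    nlinarith [hc1.1]
  -- lower bound A2 by q * ∫ G(w - δ)
  have hA2 : q * (∫ w in (1-1/10000:ℝ)..(1+1/10000), G (w - 1/10000))
      ≤ ∫ w in (1-1/10000:ℝ)..(1+1/10000), p1 ((19997/20000:ℝ) - w) * G (w - 1/10000) := by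
    rw [← intervalIntegral.integral_const_mul]
    apply intervalIntegral.integral_mono_on (μ := volume) (by norm_num)
      ((continuous_const.mul (G_cont.comp (continuous_id.sub continuous_const))).intervalIntegrable _ _)
      ((contPG' _ _).intervalIntegrable _ _)
    intro w hw
    exact mul_le_mul_of_nonneg_right (pbound w hw) (G_nonneg _)
  -- rewrite ∫ G(w-δ) over [1-δ, 1+δ] as ∫ G over [1-2δ, 1]
  have hJG : (∫ w in (1-1/10000:ℝ)..(1+1/10000), G (w - 1/10000))
      = ∫ u in (1-2/10000:ℝ)..1, G u := by
    rw [intervalIntegral.integral_comp_sub_right (fun u => G u) (1/10000)]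
    rw [show (1-1/10000:ℝ) - 1/10000 = 1-2/10000 by norm_num,
      show (1+1/10000:ℝ) - 1/10000 = 1 by norm_num]
  have hsplit : (∫ u in (1-2/10000:ℝ)..1, G u)
      = (∫ u in (1-2/10000:ℝ)..(1-1/10000), G u) + ∫ u in (1-1/10000:ℝ)..1, G u :=
    (intervalIntegral.integral_add_adjacent_intervals (μ := volume)
      (G_cont.intervalIntegrable _ _) (G_cont.intervalIntegrable _ _)).symm
  have hJ1 : (∫ u in (1-2/10000:ℝ)..(1-1/10000), G u)
      = ∫ w in (1-1/10000:ℝ)..1, G (w - 1/10000) := by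
    rw [intervalIntegral.integral_comp_sub_right (fun u => G u) (1/10000)]
    rw [show (1-1/10000:ℝ) - 1/10000 = 1-2/10000 by norm_num,
      show (1:ℝ) - 1/10000 = 1-1/10000 by norm_num]
  -- gain from the shift of G
  set J2 : ℝ := ∫ u in (1-1/10000:ℝ)..1, G u with hJ2def
  have cg : Continuous (fun w : ℝ => G (w - 1/10000)) :=
    G_cont.comp (continuous_id.sub continuous_const)
  have cgs : Continuous (fun w : ℝ => G (w - 1/10000) - G w) := cg.sub G_cont
  have hgain : (∫ w in (1-1/10000:ℝ)..1, G (w - 1/10000)) - J2 ≥ 0.344 * (1/10000:ℝ)^2 := by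
    have hint : (∫ w in (1-1/10000:ℝ)..1, G (w - 1/10000)) - J2
        = ∫ w in (1-1/10000:ℝ)..1, (G (w - 1/10000) - G w) := by
      rw [intervalIntegral.integral_sub (cg.intervalIntegrable _ _)
        (G_cont.intervalIntegrable _ _)]
    rw [hint]
    have h := intervalIntegral.integral_mono_on (μ := volume) (by norm_num : (1-1/10000:ℝ) ≤ 1)
      intervalIntegrable_const (cgs.intervalIntegrable _ _)
      (fun w hw => G_shift_near1 w hw)
    rw [intervalIntegral.integral_const, smul_eq_mul] at h
    have : (1 - (1-1/10000:ℝ)) * (0.344 * (1/10000:ℝ)) = 0.344 * (1/10000:ℝ)^2 := by norm_num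
    linarith [h, this.symm.le, this.le]
  -- bound C3
  have hC3 : (∫ w in (1-1/10000:ℝ)..1, p1 ((19997/20000:ℝ) - w) * G w) ≤ c1 * J2 := by
    rw [hJ2def, ← intervalIntegral.integral_const_mul]
    apply intervalIntegral.integral_mono_on (μ := volume) (by norm_num)
      ((contPG0 _).intervalIntegrable _ _)
      ((continuous_const.mul G_cont).intervalIntegrable _ _)
    intro w _
    exact mul_le_mul_of_nonneg_right (p1_le _) (G_nonneg _)
  have hJ2a : 0 ≤ J2 := intervalIntegral.integral_nonneg (by norm_num) (fun u _ => G_nonneg u)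
  have hJ2b : J2 ≤ 1/10000 := by
    have h := intervalIntegral.integral_mono_on (μ := volume) (by norm_num : (1-1/10000:ℝ) ≤ 1)
      (G_cont.intervalIntegrable _ _) intervalIntegrable_const (fun u _ => G_le_one u)
    rw [intervalIntegral.integral_const, smul_eq_mul] at h
    rw [hJ2def]; linarith
  -- assemble
  have key : q * ((J2 + 0.344 * (1/10000:ℝ)^2) + J2) - 2 * (c1 * J2)
      ≤ (∫ w in (1-1/10000:ℝ)..(1+1/10000), p1 ((19997/20000:ℝ) - w) * G (w - 1/10000))
      - 2 * ∫ w in (1-1/10000:ℝ)..1, p1 ((19997/20000:ℝ) - w) * G w := by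
    have h1 : q * ((J2 + 0.344 * (1/10000:ℝ)^2) + J2)
        ≤ q * (∫ w in (1-1/10000:ℝ)..(1+1/10000), G (w - 1/10000)) := by
      rw [hJG, hsplit, hJ1]
      have := hgain
      nlinarith
    nlinarith [hA2, hC3]
  have final : 1.12 * (1/10000:ℝ)^2
      ≤ q * ((J2 + 0.344 * (1/10000:ℝ)^2) + J2) - 2 * (c1 * J2) := by
    rw [hq]
    nlinarith [hc1.1, hc1.2]
  linarith

lemma part3 :
    -(0.0001 * (1/10000:ℝ)^2) ≤
      (∫ w in (-1-1/10000:ℝ)..(-1+1/10000), p1 ((19997/20000:ℝ) - w) * G (w + 1/10000))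
      - 2 * ∫ w in (-1:ℝ)..(-1+1/10000), p1 ((19997/20000:ℝ) - w) * G w := by
  have hc1 := c1_bounds
  have hB1 : 0 ≤ ∫ w in (-1-1/10000:ℝ)..(-1+1/10000), p1 ((19997/20000:ℝ) - w) * G (w + 1/10000) :=
    intervalIntegral.integral_nonneg (by norm_num)
      (fun w _ => mul_nonneg (p1_nonneg _) (G_nonneg _))
  have hC1 : (∫ w in (-1:ℝ)..(-1+1/10000), p1 ((19997/20000:ℝ) - w) * G w)
      ≤ (1/10000) * (c1 * 1e-20) := by
    have mono : ∀ w ∈ Set.Icc (-1:ℝ) (-1+1/10000),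
        p1 ((19997/20000:ℝ) - w) * G w ≤ c1 * 1e-20 := by
      intro w hw
      obtain ⟨hw1, hw2⟩ := hw
      have hp : p1 ((19997/20000:ℝ) - w) ≤ c1 * 1e-20 := by
        rw [p1_eq]
        have hu : (1.9:ℝ) ≤ 19997/20000 - w := by linarith
        have hsq : (180:ℝ) ≤ (19997/20000 - w)^2 * 50 := by nlinarith
        have he : Real.exp (-(19997/20000 - w)^2 * 50) ≤ Real.exp (-180) := by
          apply Real.exp_le_exp.mpr; linarith
        nlinarith [exp_neg_180_le, hc1.1, hc1.2, Real.exp_pos (-(19997/20000 - w)^2 * 50)]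
      calc p1 ((19997/20000:ℝ) - w) * G w ≤ p1 ((19997/20000:ℝ) - w) * 1 :=
            mul_le_mul_of_nonneg_left (G_le_one w) (p1_nonneg _)
        _ = p1 ((19997/20000:ℝ) - w) := by ring
        _ ≤ c1 * 1e-20 := hp
    have h := intervalIntegral.integral_mono_on (μ := volume) (by norm_num : (-1:ℝ) ≤ -1+1/10000)
      ((contPG0 _).intervalIntegrable _ _) intervalIntegrable_const mono
    rw [intervalIntegral.integral_const, smul_eq_mul] at h
    calc (∫ w in (-1:ℝ)..(-1+1/10000), p1 ((19997/20000:ℝ) - w) * G w)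
        ≤ (-1+1/10000 - (-1)) * (c1 * 1e-20) := h
      _ = (1/10000) * (c1 * 1e-20) := by ring_nf
  nlinarith [hc1.2]

lemma Fmain : 0 < F (19995/20000) + F (19999/20000) - 2 * F (19997/20000) := by
  have hm : F (19995/20000 : ℝ)
      = ∫ w in (-1+1/10000:ℝ)..(1+1/10000), p1 ((19997/20000:ℝ) - w) * G (w - 1/10000) := by
    rw [show (19995/20000:ℝ) = 19997/20000 - 1/10000 by norm_num]
    exact F_shift_minus (19997/20000) (1/10000)
  have hp : F (19999/20000 : ℝ)
      = ∫ w in (-1-1/10000:ℝ)..(1-1/10000), p1 ((19997/20000:ℝ) - w) * G (w + 1/10000) := by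
    rw [show (19999/20000:ℝ) = 19997/20000 + 1/10000 by norm_num]
    exact F_shift_plus (19997/20000) (1/10000)
  have hsm : (∫ w in (-1+1/10000:ℝ)..(1+1/10000), p1 ((19997/20000:ℝ) - w) * G (w - 1/10000))
      = (∫ w in (-1+1/10000:ℝ)..(1-1/10000), p1 ((19997/20000:ℝ) - w) * G (w - 1/10000))
        + ∫ w in (1-1/10000:ℝ)..(1+1/10000), p1 ((19997/20000:ℝ) - w) * G (w - 1/10000) :=
    (intervalIntegral.integral_add_adjacent_intervals (μ := volume)
      ((contPG' _ _).intervalIntegrable _ _) ((contPG' _ _).intervalIntegrable _ _)).symm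
  have hsp : (∫ w in (-1-1/10000:ℝ)..(1-1/10000), p1 ((19997/20000:ℝ) - w) * G (w + 1/10000))
      = (∫ w in (-1-1/10000:ℝ)..(-1+1/10000), p1 ((19997/20000:ℝ) - w) * G (w + 1/10000))
        + ∫ w in (-1+1/10000:ℝ)..(1-1/10000), p1 ((19997/20000:ℝ) - w) * G (w + 1/10000) :=
    (intervalIntegral.integral_add_adjacent_intervals (μ := volume)
      ((contPG _ _).intervalIntegrable _ _) ((contPG _ _).intervalIntegrable _ _)).symm
  have hs0 : F (19997/20000 : ℝ)
      = ((∫ w in (-1:ℝ)..(-1+1/10000), p1 ((19997/20000:ℝ) - w) * G w)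
        + ∫ w in (-1+1/10000:ℝ)..(1-1/10000), p1 ((19997/20000:ℝ) - w) * G w)
        + ∫ w in (1-1/10000:ℝ)..(1:ℝ), p1 ((19997/20000:ℝ) - w) * G w := by
    unfold F
    rw [intervalIntegral.integral_add_adjacent_intervals (μ := volume)
      (((contPG0 _).intervalIntegrable (-1:ℝ) (-1+1/10000)))
      (((contPG0 _).intervalIntegrable (-1+1/10000:ℝ) (1-1/10000)))]
    rw [intervalIntegral.integral_add_adjacent_intervals (μ := volume)
      (((contPG0 _).intervalIntegrable (-1:ℝ) (1-1/10000)))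
      (((contPG0 _).intervalIntegrable (1-1/10000:ℝ) 1))]
  have h1 := part1 (19997/20000)
  have h2 := part2
  have h3 := part3
  rw [hm, hp, hs0, hsm, hsp]
  nlinarith [h1, h2, h3]

/-- There exist `n ≥ 1` and times `t_1, ..., t_n ∈ (0, ∞)` such that `Φ_n` is not
concave on `(-1, 1)`. -/
theorem phi_not_concave :
    ∃ (n : ℕ), 0 < n ∧ ∃ t : Fin n → ℝ, (∀ i, 0 < t i) ∧
      ¬ ConcaveOn ℝ (Set.Ioo (-1 : ℝ) 1) (Phi n t) := by
  refine ⟨2, by norm_num, ![1/100, 1], ?_, ?_⟩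
  · intro i
    fin_cases i <;> norm_num
  · intro h
    have ha : (19995/20000 : ℝ) ∈ Set.Ioo (-1:ℝ) 1 := by constructor <;> norm_num
    have hc : (19999/20000 : ℝ) ∈ Set.Ioo (-1:ℝ) 1 := by constructor <;> norm_num
    have hcomb := h.2 ha hc (by norm_num : (0:ℝ) ≤ 1/2) (by norm_num : (0:ℝ) ≤ 1/2)
      (by norm_num : (1/2:ℝ) + 1/2 = 1)
    simp only [smul_eq_mul] at hcomb
    rw [show (1/2:ℝ) * (19995/20000) + 1/2 * (19999/20000) = 19997/20000 by norm_num] at hcomb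
    have e1 : Phi 2 ![1/100, 1] (19995/20000) = F (19995/20000) := phi_eq _
    have e2 : Phi 2 ![1/100, 1] (19999/20000) = F (19999/20000) := phi_eq _
    have e3 : Phi 2 ![1/100, 1] (19997/20000) = F (19997/20000) := phi_eq _
    rw [e1, e2, e3] at hcomb
    linarith [Fmain]
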